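/- arXiv:2110.05898 — 12 statements merged into one kernel-verified Lean document; each statement's English description precedes it below -/
import Mathlib

section
/- If a morphism h in a triangulated category C with a weight structure w factors through an object M that is without weights m,...,n, then h kills weights m,...,n. -/
open CategoryTheory CategoryTheory.Limits CategoryTheory.Pretriangulated Opposite

universe v u

variable (C : Type u) [Category.{v} C] [Preadditive C] [HasZeroObject C]
  [HasShift C ℤ] [∀ n : ℤ, (shiftFunctor C n).Additive] [Pretriangulated C]

/-- A weight structure on the triangulated category `C`. -/
structure WeightStructure where
  /-- the class `C_{w ≤ n}` -/
  le : ℤ → Set C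
  /-- the class `C_{w ≥ n}` -/
  ge : ℤ → Set C
  le_iso_closed : ∀ (n : ℤ) (X Y : C), (X ≅ Y) → X ∈ le n → Y ∈ le n
  ge_iso_closed : ∀ (n : ℤ) (X Y : C), (X ≅ Y) → X ∈ ge n → Y ∈ ge n
  le_retract : ∀ (n : ℤ) (X Y : C) (a : X ⟶ Y) (b : Y ⟶ X),
    a ≫ b = 𝟙 X → Y ∈ le n → X ∈ le n
  ge_retract : ∀ (n : ℤ) (X Y : C) (a : X ⟶ Y) (b : Y ⟶ X),
    a ≫ b = 𝟙 X → Y ∈ ge n → X ∈ ge n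
  le_shift : ∀ (n k : ℤ) (X : C), X ∈ le n → X⟦k⟧ ∈ le (n + k)
  ge_shift : ∀ (n k : ℤ) (X : C), X ∈ ge n → X⟦k⟧ ∈ ge (n + k)
  le_mono : ∀ n : ℤ, le n ⊆ le (n + 1)
  ge_anti : ∀ n : ℤ, ge (n + 1) ⊆ ge n
  orth : ∀ (n : ℤ) (X Y : C), X ∈ le n → Y ∈ ge (n + 1) → ∀ f : X ⟶ Y, f = 0
  decomp : ∀ (X : C) (k : ℤ), ∃ (A B : C) (x : A ⟶ X) (y : X ⟶ B) (δ : B ⟶ A⟦(1 : ℤ)⟧),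
    (Triangle.mk x y δ ∈ distTriang C) ∧ A ∈ le k ∧ B ∈ ge (k + 1)

variable {C}

/-- `(A, B, x, y)` is a `k`-weight decomposition of `X`. -/
def WeightStructure.IsWeightDecomp (w : WeightStructure C) (k : ℤ) {X : C} (A B : C)
    (x : A ⟶ X) (y : X ⟶ B) : Prop :=
  (∃ δ : B ⟶ A⟦(1 : ℤ)⟧, Triangle.mk x y δ ∈ distTriang C) ∧ A ∈ w.le k ∧ B ∈ w.ge (k + 1)

/-- `g : M ⟶ N` kills weights `m, …, n`. -/
def WeightStructure.KillsWeights (w : WeightStructure C) (m n : ℤ) {M N : C}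
    (g : M ⟶ N) : Prop :=
  ∃ (A A' B B' : C) (x : A ⟶ M) (x' : M ⟶ A') (y' : B ⟶ N) (y : N ⟶ B'),
    w.IsWeightDecomp n A A' x x' ∧ w.IsWeightDecomp (m - 1) B B' y' y ∧
      x ≫ g ≫ y = 0

/-- The class of objects of `C` without weights `m, …, n`. -/
def WeightStructure.without (w : WeightStructure C) (m n : ℤ) : Set C :=
  {M : C | w.KillsWeights m n (𝟙 M)}

/- Killing weights `m, …, n` is a two-sided ideal condition: composing with an arbitrary morphism
only moves the vanishing composite along, because a morphism from an object of weight `≤ n`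
lifts through `w_{≤ n}M → M`, and a morphism into an object of weight `≥ m` extends along
`N → w_{≥ m}N`. -/

namespace WeightStructure

variable {w : WeightStructure C}

theorem IsWeightDecomp.exists_lift {k : ℤ} {X A B : C} {x : A ⟶ X} {y : X ⟶ B}
    (hd : w.IsWeightDecomp k A B x y) {Z : C} (hZ : Z ∈ w.le k) (f : Z ⟶ X) :
    ∃ t : Z ⟶ A, f = t ≫ x := by
  obtain ⟨⟨δ, hT⟩, -, hB⟩ := hd
  exact Triangle.coyoneda_exact₂ _ hT f (w.orth k Z B hZ hB _)

theorem IsWeightDecomp.exists_extend {k : ℤ} {X A B : C} {x : A ⟶ X} {y : X ⟶ B}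
    (hd : w.IsWeightDecomp k A B x y) {Z : C} (hZ : Z ∈ w.ge (k + 1)) (f : X ⟶ Z) :
    ∃ r : B ⟶ Z, f = y ≫ r := by
  obtain ⟨⟨δ, hT⟩, hA, -⟩ := hd
  exact Triangle.yoneda_exact₂ _ hT f (w.orth k A Z hA hZ _)

theorem KillsWeights.comp_left {m n : ℤ} {X M N : C} {g : M ⟶ N}
    (hg : w.KillsWeights m n g) (a : X ⟶ M) : w.KillsWeights m n (a ≫ g) := by
  obtain ⟨AM, AM', B, B', xM, xM', y', y, hdM, hdN, hzero⟩ := hg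
  obtain ⟨A, A', x, x', δ, hT, hA, hA'⟩ := w.decomp X n
  obtain ⟨t, ht⟩ := hdM.exists_lift hA (x ≫ a)
  refine ⟨A, A', B, B', x, x', y', y, ⟨⟨δ, hT⟩, hA, hA'⟩, hdN, ?_⟩
  calc x ≫ (a ≫ g) ≫ y = t ≫ xM ≫ g ≫ y := by simp [reassoc_of% ht]
    _ = 0 := by rw [hzero, comp_zero]

theorem KillsWeights.comp_right {m n : ℤ} {M N Y : C} {g : M ⟶ N}
    (hg : w.KillsWeights m n g) (b : N ⟶ Y) : w.KillsWeights m n (g ≫ b) := by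
  obtain ⟨A, A', BN, BN', x, x', yN', yN, hdM, hdN, hzero⟩ := hg
  obtain ⟨B, B', y', y, δ, hT, hB, hB'⟩ := w.decomp Y (m - 1)
  obtain ⟨r, hr⟩ := hdN.exists_extend hB' (b ≫ y)
  refine ⟨A, A', B, B', x, x', y', y, hdM, ⟨⟨δ, hT⟩, hB, hB'⟩, ?_⟩
  calc x ≫ (g ≫ b) ≫ y = (x ≫ g ≫ yN) ≫ r := by simp [hr]
    _ = 0 := by rw [hzero, zero_comp]

end WeightStructure

theorem stmt0_general (w : WeightStructure C) (m n : ℤ) {X Y M : C}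
    (h : X ⟶ Y) (hM : M ∈ w.without m n) (a : X ⟶ M) (b : M ⟶ Y)
    (hfac : a ≫ b = h) : w.KillsWeights m n h := by
  have hab : w.KillsWeights m n ((a ≫ 𝟙 M) ≫ b) := (hM.comp_left a).comp_right b
  rwa [Category.comp_id, hfac] at hab

/-- If `h` factors through an object `M` without weights `m, …, n`, then `h`
kills weights `m, …, n`. -/
theorem stmt0 (w : WeightStructure C) (m n : ℤ) (hmn : m ≤ n) {X Y M : C}
    (h : X ⟶ Y) (hM : M ∈ w.without m n) (a : X ⟶ M) (b : M ⟶ Y)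
    (hfac : a ≫ b = h) : w.KillsWeights m n h :=
  stmt0_general w m n h hM a b hfac
end

section
/- Let C be a triangulated category with a weight structure w, m ≤ n integers, and g : M → N a morphism. Then g kills weights m,...,n if and only if there exists a commutative square with rows coming from weight decompositions: M → w_{≥n+1}M, N → w_{≥m}N, and a morphism j : w_{≥n+1}M → w_{≥m}N such that j composed with M → w_{≥n+1}M equals (N → w_{≥m}N) composed with g. -/
open CategoryTheory CategoryTheory.Limits CategoryTheory.Pretriangulated Opposite

universe v u

variable (C : Type u) [Category.{v} C] [Preadditive C] [HasZeroObject C]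
  [HasShift C ℤ] [∀ n : ℤ, (shiftFunctor C n).Additive] [Pretriangulated C]

variable {C}

/-! Only the triangle `w_{≤n}M → M → w_{≥n+1}M → w_{≤n}M[1]` matters: since `Hom(-, X)` is
homological, a map out of `M` vanishes on `w_{≤n}M` exactly when it factors through
`M → w_{≥n+1}M`. -/

lemma mor₁_comp_eq_zero_iff_of_distTriang {T : Triangle C} (hT : T ∈ distTriang C)
    {X : C} (f : T.obj₂ ⟶ X) : T.mor₁ ≫ f = 0 ↔ ∃ j : T.obj₃ ⟶ X, T.mor₂ ≫ j = f := by
  constructor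
  · intro hf
    obtain ⟨j, hj⟩ := Triangle.yoneda_exact₂ T hT f hf
    exact ⟨j, hj.symm⟩
  · rintro ⟨j, rfl⟩
    rw [← Category.assoc, comp_distTriang_mor_zero₁₂ T hT, zero_comp]

lemma WeightStructure.IsWeightDecomp.comp_eq_zero_iff {w : WeightStructure C} {k : ℤ}
    {M A A' : C} {x : A ⟶ M} {x' : M ⟶ A'} (h : w.IsWeightDecomp k A A' x x') {X : C}
    (f : M ⟶ X) : x ≫ f = 0 ↔ ∃ j : A' ⟶ X, x' ≫ j = f := by
  obtain ⟨δ, hT⟩ := h.1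
  exact mor₁_comp_eq_zero_iff_of_distTriang hT f

theorem stmt1_general (w : WeightStructure C) (m n : ℤ) {M N : C}
    (g : M ⟶ N) :
    w.KillsWeights m n g ↔
      ∃ (A A' B B' : C) (x : A ⟶ M) (x' : M ⟶ A') (y' : B ⟶ N) (y : N ⟶ B')
        (j : A' ⟶ B'),
        w.IsWeightDecomp n A A' x x' ∧ w.IsWeightDecomp (m - 1) B B' y' y ∧
          x' ≫ j = g ≫ y := by
  constructor
  · rintro ⟨A, A', B, B', x, x', y', y, hA, hB, hkill⟩
    obtain ⟨j, hj⟩ := (hA.comp_eq_zero_iff (g ≫ y)).1 hkill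
    exact ⟨A, A', B, B', x, x', y', y, j, hA, hB, hj⟩
  · rintro ⟨A, A', B, B', x, x', y', y, j, hA, hB, hj⟩
    exact ⟨A, A', B, B', x, x', y', y, hA, hB, (hA.comp_eq_zero_iff (g ≫ y)).2 ⟨j, hj⟩⟩

/-- `g` kills weights `m, …, n` iff there is a commutative square between the
weight decompositions `M ⟶ w_{≥ n+1}M` and `N ⟶ w_{≥ m}N`. -/
theorem stmt1 (w : WeightStructure C) (m n : ℤ) (hmn : m ≤ n) {M N : C}
    (g : M ⟶ N) :
    w.KillsWeights m n g ↔
      ∃ (A A' B B' : C) (x : A ⟶ M) (x' : M ⟶ A') (y' : B ⟶ N) (y : N ⟶ B')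
        (j : A' ⟶ B'),
        w.IsWeightDecomp n A A' x x' ∧ w.IsWeightDecomp (m - 1) B B' y' y ∧
          x' ≫ j = g ≫ y :=
  stmt1_general w m n g
end

section
/- Let C be a triangulated category with a weight structure w and let g : M → N kill weights m,...,n (m ≤ n). Then for every contravariant cohomological functor H : C^op → A into an abelian category A of weight range [m,n] (i.e., H vanishes on C_{w≤m-1} and on C_{w≥n+1}), the morphism H(g) : H(N) → H(M) is zero. -/
open CategoryTheory CategoryTheory.Limits CategoryTheory.Pretriangulated Opposite

universe v u

variable (C : Type u) [Category.{v} C] [Preadditive C] [HasZeroObject C]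
  [HasShift C ℤ] [∀ n : ℤ, (shiftFunctor C n).Additive] [Pretriangulated C]

variable {C}

/-- A contravariant additive functor `H : Cᵒᵖ ⥤ A` is cohomological if it sends
distinguished triangles to exact sequences. -/
def IsCohomological {A : Type*} [Category A] [Abelian A] (H : Cᵒᵖ ⥤ A)
    [H.Additive] : Prop :=
  ∀ (T : Triangle C) (hT : T ∈ distTriang C),
    (ShortComplex.mk (H.map T.mor₂.op) (H.map T.mor₁.op)
      (by rw [← H.map_comp, ← op_comp, comp_distTriang_mor_zero₁₂ T hT, op_zero,
        H.map_zero])).Exact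

/-- `H` has weight range `[m, n]`: it annihilates `C_{w ≤ m-1}` and `C_{w ≥ n+1}`. -/
def WeightRange {A : Type*} [Category A] [Abelian A] (w : WeightStructure C)
    (m n : ℤ) (H : Cᵒᵖ ⥤ A) : Prop :=
  (∀ X ∈ w.le (m - 1), IsZero (H.obj (op X))) ∧
    (∀ X ∈ w.ge (n + 1), IsZero (H.obj (op X)))


/-- If `g` kills weights `m, …, n` then every cohomological functor of weight
range `[m, n]` annihilates `g`. -/
theorem stmt2 {A : Type*} [Category A] [Abelian A] (w : WeightStructure C)
    (m n : ℤ) (hmn : m ≤ n) {M N : C} (g : M ⟶ N)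
    (hg : w.KillsWeights m n g) (H : Cᵒᵖ ⥤ A) [H.Additive]
    (hH : IsCohomological H) (hr : WeightRange w m n H) :
    H.map g.op = 0 := by
  obtain ⟨Aw, A', B, B', x, x', y', y, ⟨⟨δ₁, hT₁⟩, hA, hA'⟩, ⟨⟨δ₂, hT₂⟩, hB, hB'⟩, hxy⟩ := hg
  have hA'0 : IsZero (H.obj (op A')) := hr.2 A' hA'
  have hB0 : IsZero (H.obj (op B)) := hr.1 B hB
  have e1 := hH _ hT₁
  have e2 := hH _ hT₂
  have hmono : Mono (H.map x.op) := e1.mono_g (hA'0.eq_of_src _ _)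
  have hepi : Epi (H.map y.op) := e2.epi_f (hB0.eq_of_tgt _ _)
  rw [← cancel_epi (H.map y.op), ← cancel_mono (H.map x.op)]
  have : H.map y.op ≫ H.map g.op ≫ H.map x.op = H.map ((x ≫ g ≫ y).op) := by
    simp
  rw [Category.assoc, this, hxy, op_zero, H.map_zero, comp_zero, zero_comp]
end

section
/- Let C be a triangulated category with a weight structure w, H : C^op → A a cohomological functor of weight range [m,n], and X an object of C. Then for any weight decomposition of X, the map H(w_{≥m}X) → H(X) is an epimorphism and the map H(X) → H(w_{≤n}X) is a monomorphism. -/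
open CategoryTheory CategoryTheory.Limits CategoryTheory.Pretriangulated Opposite

universe v u

variable (C : Type u) [Category.{v} C] [Preadditive C] [HasZeroObject C]
  [HasShift C ℤ] [∀ n : ℤ, (shiftFunctor C n).Additive] [Pretriangulated C]

variable {C}

/-- For `H` cohomological of weight range `[m, n]`, the map `H(w_{≥ m}X) → H(X)`
is epi and `H(X) → H(w_{≤ n}X)` is mono. -/
theorem stmt3 {A : Type*} [Category A] [Abelian A] (w : WeightStructure C)
    (m n : ℤ) (hmn : m ≤ n) (H : Cᵒᵖ ⥤ A) [H.Additive]
    (hH : IsCohomological H) (hr : WeightRange w m n H) (X : C)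
    (A₁ A₂ B₁ B₂ : C) (x : A₁ ⟶ X) (x' : X ⟶ A₂) (y : B₁ ⟶ X) (y' : X ⟶ B₂)
    (h₁ : w.IsWeightDecomp (m - 1) A₁ A₂ x x')
    (h₂ : w.IsWeightDecomp n B₁ B₂ y y') :
    Epi (H.map x'.op) ∧ Mono (H.map y.op) := by
  
  obtain ⟨⟨δ₁, hT₁⟩, hA₁, hA₂⟩ := h₁
  obtain ⟨⟨δ₂, hT₂⟩, hB₁, hB₂⟩ := h₂
  constructor
  · exact (hH _ hT₁).epi_f ((hr.1 A₁ hA₁).eq_zero_of_tgt _)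
  · exact (hH _ hT₂).mono_g
      ((hr.2 B₂ (by simpa using hB₂)).eq_zero_of_src _)
end

section
/- Let C be a triangulated category with a weight structure w and M an object of C. If H(M) = 0 for every cohomological functor H : C^op → Ab of weight range [m,n], then M is without weights m,...,n. -/
open CategoryTheory CategoryTheory.Limits CategoryTheory.Pretriangulated Opposite

universe v u

variable (C : Type u) [Category.{v} C] [Preadditive C] [HasZeroObject C]
  [HasShift C ℤ] [∀ n : ℤ, (shiftFunctor C n).Additive] [Pretriangulated C]

variable {C}

/-
Let `y : M ⟶ B` come from an `(m-1)`-weight decomposition of `M`, so that `B ∈ C_{w ≥ m}`.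
Truncating `C(-, B)` gives the functor `V ↦ Z(V)`, where `Z(V)` consists of the maps
`w_{≤n}V ⟶ B` whose restriction along the boundary `(w_{≥n+1}V)[-1] ⟶ w_{≤n}V` kills every map
from `C_{w ≤ n}`. It is cohomological, it vanishes on `C_{w ≤ m-1}` by orthogonality against `B`
and on `C_{w ≥ n+1}` because there `w_{≤n}V ⟶ V` is zero. The composite `w_{≤n}M ⟶ M ⟶ B`
lies in `Z(M) = 0`, so it vanishes.
-/

namespace WeightStructure

structure Decomposition (w : WeightStructure C) (n : ℤ) (V : C) where
  lo : C
  hi : C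
  ι : lo ⟶ V
  π : V ⟶ hi
  δ : hi ⟶ lo⟦(1 : ℤ)⟧
  distinguished : Triangle.mk ι π δ ∈ distTriang C
  lo_mem : lo ∈ w.le n
  hi_mem : hi ∈ w.ge (n + 1)

noncomputable def decomposition (w : WeightStructure C) (n : ℤ) (V : C) :
    w.Decomposition n V :=
  Classical.choice <| by
    obtain ⟨A, B, x, y, δ, hd, hA, hB⟩ := w.decomp V n
    exact ⟨⟨A, B, x, y, δ, hd, hA, hB⟩⟩

variable (w : WeightStructure C) {n : ℤ}

lemma le_monotone : Monotone w.le := monotone_int_of_le_succ w.le_mono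

lemma shift_neg_one_mem_le {X : C} (hX : X ∈ w.le (n + 1)) :
    X⟦(-1 : ℤ)⟧ ∈ w.le n := by
  simpa using w.le_shift (n + 1) (-1) X hX

lemma obj₂_mem_le_of_distTriang {T : Triangle C}
    (hT : T ∈ distTriang C) (h₁ : T.obj₁ ∈ w.le n) (h₃ : T.obj₃ ∈ w.le n) :
    T.obj₂ ∈ w.le n := by
  obtain ⟨A, B, x, y, δ, hd, hA, hB⟩ := w.decomp T.obj₂ n
  have hy : y = 0 := by
    obtain ⟨g, hg⟩ := Triangle.yoneda_exact₂ _ hT y (w.orth n _ _ h₁ hB _)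
    rw [hg, w.orth n _ _ h₃ hB g, comp_zero]
  obtain ⟨r, hr⟩ := Triangle.coyoneda_exact₂ _ hd (𝟙 T.obj₂)
    (show 𝟙 T.obj₂ ≫ y = 0 by rw [hy, comp_zero])
  exact w.le_retract n _ _ r x hr.symm hA

lemma obj₃_mem_le_of_distTriang {T : Triangle C}
    (hT : T ∈ distTriang C) (h₁ : T.obj₁ ∈ w.le n) (h₂ : T.obj₂ ∈ w.le (n + 1)) :
    T.obj₃ ∈ w.le (n + 1) :=
  w.obj₂_mem_le_of_distTriang (rot_of_distTriang _ hT) h₂ (w.le_shift n 1 _ h₁)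

-- The fibre of `θ` lies in `C_{w ≤ n}`.
lemma exists_eq_comp_of_mem_le {S F B : C} (hS : S ∈ w.le n)
    (hF : F ∈ w.le (n + 1)) (θ : S ⟶ F) (χ : S ⟶ B)
    (h : ∀ U ∈ w.le n, ∀ u : U ⟶ S, u ≫ θ = 0 → u ≫ χ = 0) :
    ∃ e : F ⟶ B, χ = θ ≫ e := by
  obtain ⟨R, c, δ, hθ⟩ := distinguished_cocone_triangle θ
  have hθ' := inv_rot_of_distTriang _ hθ
  have hR : R⟦(-1 : ℤ)⟧ ∈ w.le n :=
    w.shift_neg_one_mem_le (w.obj₃_mem_le_of_distTriang hθ hS hF)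
  exact Triangle.yoneda_exact₂ _ hθ' χ (h _ hR _ (comp_distTriang_mor_zero₁₂ _ hθ'))

namespace Decomposition

variable {w} {V V' : C} (D : w.Decomposition n V)

noncomputable def boundary : D.hi⟦(-1 : ℤ)⟧ ⟶ D.lo :=
  (Triangle.mk D.ι D.π D.δ).invRotate.mor₁

lemma invRotate_distinguished : (Triangle.mk D.ι D.π D.δ).invRotate ∈ distTriang C :=
  inv_rot_of_distTriang _ D.distinguished

@[simp]
lemma boundary_ι : D.boundary ≫ D.ι = 0 :=
  comp_distTriang_mor_zero₁₂ _ D.invRotate_distinguished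

lemma exists_lift {T : C} (hT : T ∈ w.le n) (t : T ⟶ V) : ∃ t' : T ⟶ D.lo, t' ≫ D.ι = t := by
  obtain ⟨t', ht'⟩ :=
    Triangle.coyoneda_exact₂ _ D.distinguished t (w.orth n _ _ hT D.hi_mem _)
  exact ⟨t', ht'.symm⟩

lemma exists_eq_comp_boundary {W : C} (u : W ⟶ D.lo) (hu : u ≫ D.ι = 0) :
    ∃ v : W ⟶ D.hi⟦(-1 : ℤ)⟧, u = v ≫ D.boundary :=
  Triangle.coyoneda_exact₂ _ D.invRotate_distinguished u hu

noncomputable def map (D' : w.Decomposition n V') (g : V ⟶ V') : D.lo ⟶ D'.lo :=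
  (D'.exists_lift D.lo_mem (D.ι ≫ g)).choose

@[simp]
lemma map_ι (D' : w.Decomposition n V') (g : V ⟶ V') : D.map D' g ≫ D'.ι = D.ι ≫ g :=
  (D'.exists_lift D.lo_mem (D.ι ≫ g)).choose_spec

-- On cocycles the choice of the lifts `map` does not matter (`comp_eq_comp_of_mem_cocycles`),
-- which makes `V ↦ D.cocycles B` functorial.
def cocycles (B : C) : AddSubgroup (D.lo ⟶ B) where
  carrier := {φ | ∀ T ∈ w.le n, ∀ t : T ⟶ D.hi⟦(-1 : ℤ)⟧, t ≫ D.boundary ≫ φ = 0}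
  add_mem' hφ hψ T hT t := by
    rw [Preadditive.comp_add, Preadditive.comp_add, hφ T hT t, hψ T hT t, add_zero]
  zero_mem' T hT t := by rw [comp_zero, comp_zero]
  neg_mem' hφ T hT t := by rw [Preadditive.comp_neg, Preadditive.comp_neg, hφ T hT t, neg_zero]

variable {D} {B : C} {φ : D.lo ⟶ B}

lemma comp_eq_zero_of_mem_cocycles (hφ : φ ∈ D.cocycles B) {T : C} (hT : T ∈ w.le n)
    (u : T ⟶ D.lo) (hu : u ≫ D.ι = 0) : u ≫ φ = 0 := by
  obtain ⟨v, rfl⟩ := D.exists_eq_comp_boundary u hu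
  rw [Category.assoc]
  exact hφ T hT v

lemma comp_eq_comp_of_mem_cocycles (hφ : φ ∈ D.cocycles B) {T : C} (hT : T ∈ w.le n)
    {u₁ u₂ : T ⟶ D.lo} (hu : u₁ ≫ D.ι = u₂ ≫ D.ι) : u₁ ≫ φ = u₂ ≫ φ := by
  rw [← sub_eq_zero, ← Preadditive.sub_comp]
  exact comp_eq_zero_of_mem_cocycles hφ hT _ (by rw [Preadditive.sub_comp, hu, sub_self])

lemma mem_cocycles_of_ι_comp (E : w.Decomposition n (D.hi⟦(-1 : ℤ)⟧))
    (h : E.ι ≫ D.boundary ≫ φ = 0) : φ ∈ D.cocycles B := by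
  intro T hT t
  obtain ⟨t', rfl⟩ := E.exists_lift hT t
  rw [Category.assoc, h, comp_zero]

lemma ι_comp_mem_cocycles (y : V ⟶ B) : D.ι ≫ y ∈ D.cocycles B := by
  intro T hT t
  rw [← Category.assoc D.boundary, boundary_ι, zero_comp, comp_zero]

lemma map_comp_mem_cocycles {D' : w.Decomposition n V'} (g : V ⟶ V') {ψ : D'.lo ⟶ B}
    (hψ : ψ ∈ D'.cocycles B) : D.map D' g ≫ ψ ∈ D.cocycles B := by
  intro T hT t
  obtain ⟨v, hv⟩ := D'.exists_eq_comp_boundary (D.boundary ≫ D.map D' g)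
    (by rw [Category.assoc, map_ι, ← Category.assoc, boundary_ι, zero_comp])
  rw [← Category.assoc D.boundary, hv, Category.assoc, ← Category.assoc t]
  exact hψ T hT (t ≫ v)

lemma cocycles_eq_bot_of_mem_ge (hV : V ∈ w.ge (n + 1)) : D.cocycles B = ⊥ := by
  refine (AddSubgroup.eq_bot_iff_forall _).2 fun φ hφ => ?_
  simpa using comp_eq_zero_of_mem_cocycles hφ D.lo_mem (𝟙 _) (w.orth n _ _ D.lo_mem hV _)

lemma cocycles_eq_bot_of_mem_le {k : ℤ} (hk : k ≤ n + 1) (hV : V ∈ w.le (k - 1))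
    (hB : B ∈ w.ge k) : D.cocycles B = ⊥ := by
  refine (AddSubgroup.eq_bot_iff_forall _).2 fun φ hφ => ?_
  obtain ⟨r, hr⟩ := D.exists_lift (w.le_monotone (by omega) hV) (𝟙 V)
  have hrφ : r ≫ φ = 0 := w.orth (k - 1) _ _ hV (by simpa using hB) _
  calc φ = (D.ι ≫ r) ≫ φ := by
        simpa using comp_eq_comp_of_mem_cocycles hφ D.lo_mem (u₁ := 𝟙 _) (u₂ := D.ι ≫ r)
          (by rw [Category.assoc, hr, Category.id_comp, Category.comp_id])
    _ = 0 := by rw [Category.assoc, hrφ, comp_zero]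

end Decomposition

open Decomposition

variable {w} {B : C}

section Exactness

variable {T : Triangle C} {D₁ : w.Decomposition n T.obj₁} {D₂ : w.Decomposition n T.obj₂}
  {φ : D₂.lo ⟶ B}

lemma comp_eq_zero_of_comp_mor₂_eq_zero (hT : T ∈ distTriang C) (hφ : φ ∈ D₂.cocycles B)
    (hφ₁ : D₁.map D₂ T.mor₁ ≫ φ = 0) {S : C} (hS : S ∈ w.le n) (s : S ⟶ D₂.lo)
    (hs : s ≫ D₂.ι ≫ T.mor₂ = 0) : s ≫ φ = 0 := by
  obtain ⟨l, hl⟩ := Triangle.coyoneda_exact₂ T hT (s ≫ D₂.ι) (by rwa [Category.assoc])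
  obtain ⟨l', rfl⟩ := D₁.exists_lift hS l
  calc s ≫ φ = (l' ≫ D₁.map D₂ T.mor₁) ≫ φ :=
        comp_eq_comp_of_mem_cocycles hφ hS (by rw [hl, Category.assoc, Category.assoc, map_ι])
    _ = 0 := by rw [Category.assoc, hφ₁, comp_zero]

lemma exists_mem_cocycles_map_comp_eq (hT : T ∈ distTriang C) (hφ : φ ∈ D₂.cocycles B)
    (hφ₁ : D₁.map D₂ T.mor₁ ≫ φ = 0) (D₃ : w.Decomposition n T.obj₃) :
    ∃ ψ ∈ D₃.cocycles B, D₂.map D₃ T.mor₂ ≫ ψ = φ := by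
  set b := D₂.map D₃ T.mor₂
  have hφb : ∀ S ∈ w.le n, ∀ s : S ⟶ D₂.lo, s ≫ b ≫ D₃.ι = 0 → s ≫ φ = 0 := fun S hS s hs =>
    comp_eq_zero_of_comp_mor₂_eq_zero hT hφ hφ₁ hS s (by rwa [← map_ι])
  obtain ⟨F, γ, δ, hb⟩ := distinguished_cocone_triangle b
  have hb' := inv_rot_of_distTriang _ hb
  have hbγ : b ≫ γ = 0 := comp_distTriang_mor_zero₁₂ _ hb
  have hF : F ∈ w.le (n + 1) :=
    w.obj₃_mem_le_of_distTriang hb D₂.lo_mem (w.le_mono n D₃.lo_mem)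
  set α : F⟦(-1 : ℤ)⟧ ⟶ D₂.lo := (Triangle.mk b γ δ).invRotate.mor₁
  have hαb : α ≫ b = 0 := comp_distTriang_mor_zero₁₂ _ hb'
  obtain ⟨ψ₀, rfl⟩ : ∃ ψ₀, φ = b ≫ ψ₀ := Triangle.yoneda_exact₂ _ hb' φ <|
    hφb _ (w.shift_neg_one_mem_le hF) α (by rw [← Category.assoc, hαb, zero_comp])
  -- `ψ₀` need not be a cocycle; it is corrected by a map factoring through `γ`.
  let E := w.decomposition n (D₃.hi⟦(-1 : ℤ)⟧)
  obtain ⟨e, he⟩ := w.exists_eq_comp_of_mem_le E.lo_mem hF (E.ι ≫ D₃.boundary ≫ γ)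
      (E.ι ≫ D₃.boundary ≫ ψ₀) fun U hU u hu => by
    obtain ⟨v, hv⟩ : ∃ v, u ≫ E.ι ≫ D₃.boundary = v ≫ b :=
      Triangle.coyoneda_exact₂ _ hb _ <| by
        change (u ≫ E.ι ≫ D₃.boundary) ≫ γ = 0
        simpa only [Category.assoc] using hu
    have hvb : v ≫ b ≫ ψ₀ = 0 := hφb U hU v <| by
      rw [← Category.assoc, ← hv]
      simp only [Category.assoc, boundary_ι, comp_zero]
    rw [reassoc_of% hv, hvb]
  refine ⟨ψ₀ - γ ≫ e, D₃.mem_cocycles_of_ι_comp E ?_, ?_⟩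
  · simp only [Preadditive.comp_sub, he, Category.assoc, sub_self]
  · rw [Preadditive.comp_sub, ← Category.assoc, hbγ, zero_comp, sub_zero]

end Exactness

variable (w n B)

noncomputable def truncatedHom : Cᵒᵖ ⥤ AddCommGrpCat.{v} where
  obj V := AddCommGrpCat.of ((w.decomposition n V.unop).cocycles B)
  map {V V'} g := AddCommGrpCat.ofHom <|
    ((Preadditive.leftComp B (Decomposition.map _ _ g.unop)).comp
      (AddSubgroup.subtype _)).codRestrict _ fun φ => map_comp_mem_cocycles g.unop φ.2
  map_id V := by
    ext φ
    exact comp_eq_comp_of_mem_cocycles φ.2 (w.decomposition n V.unop).lo_mem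
      (u₁ := Decomposition.map _ _ (𝟙 V).unop) (u₂ := 𝟙 _) (by simp) |>.trans
        (Category.id_comp _)
  map_comp {V V' V''} g h := by
    ext φ
    exact comp_eq_comp_of_mem_cocycles φ.2 (w.decomposition n V''.unop).lo_mem
      (u₁ := Decomposition.map _ _ (g ≫ h).unop)
      (u₂ := Decomposition.map _ (w.decomposition n V'.unop) h.unop ≫
        Decomposition.map _ _ g.unop)
      (by simp only [unop_comp, Category.assoc, map_ι]
          rw [← Category.assoc (Decomposition.map _ _ _), map_ι, Category.assoc])
      |>.trans (Category.assoc _ _ _)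

instance : (truncatedHom w n B).Additive where
  map_add {V V'} f g := by
    refine AddCommGrpCat.ext fun φ => Subtype.ext ?_
    exact (comp_eq_comp_of_mem_cocycles φ.2 (w.decomposition n V'.unop).lo_mem
      (u₁ := Decomposition.map _ _ (f + g).unop)
      (u₂ := Decomposition.map _ _ f.unop + Decomposition.map _ _ g.unop) (by simp)).trans
        (Preadditive.add_comp _ _ _ _ _ _)

lemma isCohomological_truncatedHom : IsCohomological (truncatedHom w n B) := by
  intro T hT
  rw [ShortComplex.ab_exact_iff]
  intro φ hφ
  obtain ⟨ψ, hψ, hψφ⟩ := exists_mem_cocycles_map_comp_eq hT φ.2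
    (congrArg Subtype.val hφ) (w.decomposition n T.obj₃)
  exact ⟨⟨ψ, hψ⟩, Subtype.ext hψφ⟩

lemma isZero_truncatedHom_obj {V : C} (h : (w.decomposition n V).cocycles B = ⊥) :
    IsZero ((truncatedHom w n B).obj (op V)) := by
  rw [AddCommGrpCat.isZero_iff_subsingleton]
  change Subsingleton ((w.decomposition n V).cocycles B)
  rw [h]
  infer_instance

lemma weightRange_truncatedHom {m : ℤ} (hmn : m ≤ n + 1) (hB : B ∈ w.ge m) :
    WeightRange w m n (truncatedHom w n B) :=
  ⟨fun _ hX => isZero_truncatedHom_obj w n B (cocycles_eq_bot_of_mem_le hmn hX hB),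
    fun _ hX => isZero_truncatedHom_obj w n B (cocycles_eq_bot_of_mem_ge hX)⟩

end WeightStructure

/-- If every cohomological functor `Cᵒᵖ ⥤ Ab` of weight range `[m, n]` vanishes
on `M`, then `M` is without weights `m, …, n`. -/
theorem stmt4 (w : WeightStructure C) (m n : ℤ) (hmn : m ≤ n) (M : C)
    (hM : ∀ (H : Cᵒᵖ ⥤ AddCommGrpCat.{v}) [H.Additive], IsCohomological H →
      WeightRange w m n H → IsZero (H.obj (op M))) :
    M ∈ w.without m n := by
  obtain ⟨B, B', y', y, δ, hd, hB, hB'⟩ := w.decomp M (m - 1)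
  have hB'm : B' ∈ w.ge m := by simpa using hB'
  let D := w.decomposition n M
  have hzero := hM _ (w.isCohomological_truncatedHom n B')
    (w.weightRange_truncatedHom n B' (by omega) hB'm)
  rw [AddCommGrpCat.isZero_iff_subsingleton] at hzero
  have hxy : D.ι ≫ y = 0 :=
    congrArg Subtype.val (hzero.elim ⟨D.ι ≫ y, D.ι_comp_mem_cocycles y⟩ 0)
  exact ⟨D.lo, D.hi, B, B', D.ι, D.π, y', y, ⟨⟨D.δ, D.distinguished⟩, D.lo_mem, D.hi_mem⟩,
    ⟨⟨δ, hd⟩, hB, hB'⟩, by rw [Category.id_comp, hxy]⟩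
end

section
/- Let C be a triangulated category with a weight structure w and m ≤ n. If M is a retract of an object M~ that is an extension of an element of C_{w≥n+1} by an element of C_{w≤m-1} (i.e., there is a distinguished triangle L → M~ → R → L[1] with L ∈ C_{w≤m-1}, R ∈ C_{w≥n+1}), then M is without weights m,...,n. -/
open CategoryTheory CategoryTheory.Limits CategoryTheory.Pretriangulated Opposite

universe v u

variable (C : Type u) [Category.{v} C] [Preadditive C] [HasZeroObject C]
  [HasShift C ℤ] [∀ n : ℤ, (shiftFunctor C n).Additive] [Pretriangulated C]

variable {C}

namespace WeightStructure

variable (w : WeightStructure C)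

theorem exists_isWeightDecomp (k : ℤ) (X : C) :
    ∃ (A B : C) (x : A ⟶ X) (y : X ⟶ B), w.IsWeightDecomp k A B x y := by
  obtain ⟨A, B, x, y, δ, hT, hA, hB⟩ := w.decomp X k
  exact ⟨A, B, x, y, ⟨δ, hT⟩, hA, hB⟩

theorem killsWeights_of_forall {m n : ℤ} {M N : C} (g : M ⟶ N)
    (h : ∀ (A B : C) (x : A ⟶ M) (y : N ⟶ B), A ∈ w.le n → B ∈ w.ge m → x ≫ g ≫ y = 0) :
    w.KillsWeights m n g := by
  obtain ⟨A, A', x, x', hx⟩ := w.exists_isWeightDecomp n M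
  obtain ⟨B, B', y', y, hy⟩ := w.exists_isWeightDecomp (m - 1) N
  have hB' : B' ∈ w.ge m := by simpa using hy.2.2
  exact ⟨A, A', B, B', x, x', y', y, hx, hy, h A B' x y hx.2.1 hB'⟩

theorem comp_eq_zero_of_distTriang {m n : ℤ} {L Mt R : C} {f : L ⟶ Mt} {g : Mt ⟶ R}
    {δ : R ⟶ L⟦(1 : ℤ)⟧} (hT : Triangle.mk f g δ ∈ distTriang C) (hL : L ∈ w.le (m - 1))
    (hR : R ∈ w.ge (n + 1)) {A B : C} (x : A ⟶ Mt) (y : Mt ⟶ B) (hA : A ∈ w.le n)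
    (hB : B ∈ w.ge m) : x ≫ y = 0 := by
  obtain ⟨φ, rfl⟩ : ∃ φ : A ⟶ L, x = φ ≫ f :=
    Triangle.coyoneda_exact₂ _ hT x (w.orth n A R hA hR _)
  have hfy : f ≫ y = 0 := w.orth (m - 1) L B hL (by simpa using hB) _
  rw [Category.assoc, hfy, comp_zero]

end WeightStructure

theorem stmt5_general (w : WeightStructure C) (m n : ℤ) {M Mt : C}
    (a : M ⟶ Mt) (b : Mt ⟶ M) (hab : a ≫ b = 𝟙 M) (L R : C) (f : L ⟶ Mt)
    (g : Mt ⟶ R) (δ : R ⟶ L⟦(1 : ℤ)⟧)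
    (hT : Triangle.mk f g δ ∈ distTriang C) (hL : L ∈ w.le (m - 1))
    (hR : R ∈ w.ge (n + 1)) :
    M ∈ w.without m n := by
  refine w.killsWeights_of_forall (𝟙 M) fun A B x y hA hB => ?_
  calc x ≫ 𝟙 M ≫ y = (x ≫ a) ≫ (b ≫ y) := by simp [← hab]
    _ = 0 := w.comp_eq_zero_of_distTriang hT hL hR _ _ hA hB

/-- A retract of an extension of an element of `C_{w ≥ n+1}` by an element of
`C_{w ≤ m-1}` is without weights `m, …, n`. -/
theorem stmt5 (w : WeightStructure C) (m n : ℤ) (hmn : m ≤ n) {M Mt : C}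
    (a : M ⟶ Mt) (b : Mt ⟶ M) (hab : a ≫ b = 𝟙 M) (L R : C) (f : L ⟶ Mt)
    (g : Mt ⟶ R) (δ : R ⟶ L⟦(1 : ℤ)⟧)
    (hT : Triangle.mk f g δ ∈ distTriang C) (hL : L ∈ w.le (m - 1))
    (hR : R ∈ w.ge (n + 1)) :
    M ∈ w.without m n :=
  stmt5_general w m n a b hab L R f g δ hT hL hR
end

section
/- Let C be an idempotent complete triangulated category with a weight structure w. If M is without weights m,...,n (m ≤ n), then M is itself an extension of an element of C_{w≥n+1} by an element of C_{w≤m-1}: there exists a distinguished triangle L → M → R → L[1] with L ∈ C_{w≤m-1} and R ∈ C_{w≥n+1}. -/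
open CategoryTheory CategoryTheory.Limits CategoryTheory.Pretriangulated Opposite

universe v u

variable (C : Type u) [Category.{v} C] [Preadditive C] [HasZeroObject C]
  [HasShift C ℤ] [∀ n : ℤ, (shiftFunctor C n).Additive] [Pretriangulated C]

variable {C}

/-!
Take an `n`-weight decomposition `x : A ⟶ M` (with cone `A'`) and an `(m-1)`-weight decomposition
`y' : B ⟶ M` such that `x` vanishes on the weights `≥ m` of `M`. Then `x` factors through `y'`
and, by orthogonality, `y'` through `x`: `x = a ≫ y'`, `y' = b ≫ x`. Since `m ≤ n`, orthogonality
also forces `b ≫ a ≫ b = b`, so `a ≫ b` is an idempotent of `A` fixing `x`. Its image `L` is a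
retract of `B`, hence of weights `≤ m - 1`, and `L ⟶ M` is a retract of `x` in the arrow
category, so its cone is a retract of `A'`, hence of weights `≥ n + 1`.
-/

/-- Cones are not functorial, but by the five lemma the composite of the two induced maps
between cones is an automorphism. -/
theorem CategoryTheory.Pretriangulated.nonempty_retract_obj₃_of_retractArrow_mor₁
    {T T' : Triangle C} (hT : T ∈ distTriang C) (hT' : T' ∈ distTriang C)
    (h : RetractArrow T.mor₁ T'.mor₁) : Nonempty (Retract T.obj₃ T'.obj₃) := by
  obtain ⟨c, hc₂, hc₃⟩ := complete_distinguished_triangle_morphism T T' hT hT' h.i.left h.i.right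
    h.i_w.symm
  obtain ⟨d, hd₂, hd₃⟩ := complete_distinguished_triangle_morphism T' T hT' hT h.r.left h.r.right
    h.r_w.symm
  let φ : T ⟶ T' := Triangle.homMk _ _ h.i.left h.i.right c h.i_w.symm hc₂ hc₃
  let ψ : T' ⟶ T := Triangle.homMk _ _ h.r.left h.r.right d h.r_w.symm hd₂ hd₃
  have : IsIso (c ≫ d) := isIso₃_of_isIso₁₂ (φ ≫ ψ) hT hT
    (by rw [show (φ ≫ ψ).hom₁ = 𝟙 _ from h.retract_left]; infer_instance)
    (by rw [show (φ ≫ ψ).hom₂ = 𝟙 _ from h.retract_right]; infer_instance)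
  exact ⟨⟨c, d ≫ inv (c ≫ d), by rw [← Category.assoc, IsIso.hom_inv_id]⟩⟩

namespace WeightStructure

variable (w : WeightStructure C)

lemma antitone_ge : Antitone w.ge :=
  antitone_int_of_succ_le w.ge_anti

lemma hom_eq_zero_of_lt {k l : ℤ} (hkl : k < l) {X Y : C} (hX : X ∈ w.le k) (hY : Y ∈ w.ge l)
    (f : X ⟶ Y) : f = 0 :=
  w.orth k X Y hX (w.antitone_ge (by omega : k + 1 ≤ l) hY) f

lemma eq_zero_of_comp_mor₁_eq_zero {T : Triangle C} (hT : T ∈ distTriang C) {k l : ℤ}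
    (hkl : k + 1 < l) (h₃ : T.obj₃ ∈ w.ge l) {X : C} (hX : X ∈ w.le k) (f : X ⟶ T.obj₁)
    (hf : f ≫ T.mor₁ = 0) : f = 0 := by
  obtain ⟨u, rfl⟩ := Triangle.coyoneda_exact₂ _ (inv_rot_of_distTriang _ hT) f hf
  have hu : u = 0 := w.hom_eq_zero_of_lt (l := l + -1) (by omega) hX (w.ge_shift l (-1) _ h₃) u
  rw [hu]
  exact zero_comp

lemma exists_idempotent_factorization_of_mem_without {m n : ℤ} (hmn : m ≤ n) {M : C}
    (hM : M ∈ w.without m n) :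
    ∃ (A A' : C) (x : A ⟶ M) (x' : M ⟶ A') (δ : A' ⟶ A⟦(1 : ℤ)⟧),
      Triangle.mk x x' δ ∈ distTriang C ∧ A' ∈ w.ge (n + 1) ∧
      ∃ (B : C) (a : A ⟶ B) (b : B ⟶ A), B ∈ w.le (m - 1) ∧ a ≫ b ≫ x = x ∧ b ≫ a ≫ b = b := by
  obtain ⟨A, A', B, B', x, x', y', y, ⟨⟨δ, hTA⟩, -, hA'⟩, ⟨⟨δB, hTB⟩, hB, -⟩, hxy⟩ := hM
  rw [Category.id_comp] at hxy
  obtain ⟨a, ha⟩ : ∃ a : A ⟶ B, x = a ≫ y' :=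
    Triangle.coyoneda_exact₂ _ hTB x hxy
  obtain ⟨b, hb⟩ : ∃ b : B ⟶ A, y' = b ≫ x :=
    Triangle.coyoneda_exact₂ _ hTA y' (w.hom_eq_zero_of_lt (by omega) hB hA' _)
  refine ⟨A, A', x, x', δ, hTA, hA', B, a, b, hB, by rw [← hb, ← ha], ?_⟩
  rw [← sub_eq_zero]
  refine w.eq_zero_of_comp_mor₁_eq_zero hTA (k := m - 1) (by omega) hA' hB _ ?_
  change (b ≫ a ≫ b - b) ≫ x = 0
  rw [Preadditive.sub_comp, Category.assoc, Category.assoc, ← hb, ← ha, ← hb, sub_self]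

end WeightStructure

/-- In an idempotent complete triangulated category, an object without weights
`m, …, n` is an extension of an element of `C_{w ≥ n+1}` by an element of
`C_{w ≤ m-1}`. -/
theorem stmt6 [IsIdempotentComplete C] (w : WeightStructure C) (m n : ℤ)
    (hmn : m ≤ n) (M : C) (hM : M ∈ w.without m n) :
    ∃ (L R : C) (f : L ⟶ M) (g : M ⟶ R) (δ : R ⟶ L⟦(1 : ℤ)⟧),
      (Triangle.mk f g δ ∈ distTriang C) ∧ L ∈ w.le (m - 1) ∧
        R ∈ w.ge (n + 1) := by
  obtain ⟨A, A', x, x', δ, hTA, hA', B, a, b, hB, hx, hb⟩ :=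
    w.exists_idempotent_factorization_of_mem_without hmn hM
  obtain ⟨L, i, e, hie, hei⟩ :=
    IsIdempotentComplete.idempotents_split A (a ≫ b) (by simp only [Category.assoc, hb])
  obtain ⟨R, g, δ', hTL⟩ := distinguished_cocone_triangle (i ≫ x)
  have hLB : (i ≫ a) ≫ (b ≫ e) = 𝟙 L := by
    rw [Category.assoc, ← Category.assoc a, ← hei, Category.assoc, reassoc_of% hie, hie]
  have hxL : RetractArrow (i ≫ x) x :=
    { i := Arrow.homMk' i (𝟙 M)
      r := Arrow.homMk' e (𝟙 M) (by simp [reassoc_of% hei, hx])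
      retract := by ext <;> simp [hie] }
  obtain ⟨hR⟩ := nonempty_retract_obj₃_of_retractArrow_mor₁ hTL hTA hxL
  exact ⟨L, R, i ≫ x, g, δ', hTL, w.le_retract _ L B (i ≫ a) (b ≫ e) hLB hB,
    w.ge_retract _ R A' hR.i hR.r hR.retract hA'⟩
end

section
/- Let C be a triangulated category with a weight structure w. For any M ∈ C, the representable functor H_M = Hom(−, M) is of weight range ≥ m (i.e., vanishes on C_{w≤m-1}) if and only if M ∈ C_{w≥m}. -/
open CategoryTheory CategoryTheory.Limits CategoryTheory.Pretriangulated Opposite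

universe v u

variable (C : Type u) [Category.{v} C] [Preadditive C] [HasZeroObject C]
  [HasShift C ℤ] [∀ n : ℤ, (shiftFunctor C n).Additive] [Pretriangulated C]

variable {C}

/-!
Orthogonality gives one direction. Conversely, take a weight decomposition
`A → M → B → A⟦1⟧` with `A ∈ C_{w ≤ m-1}` and `B ∈ C_{w ≥ m}`: the map `A → M` vanishes,
so `M → B` is a split monomorphism and `M` is a retract of `B`.
-/

lemma CategoryTheory.Pretriangulated.isSplitMono_mor₂_of_mor₁_eq_zero
    (T : Triangle C) (hT : T ∈ distTriang C) (h : T.mor₁ = 0) : IsSplitMono T.mor₂ := by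
  obtain ⟨r, hr⟩ := Triangle.yoneda_exact₂ T hT (𝟙 T.obj₂) (by rw [h, zero_comp])
  exact .mk' ⟨r, hr.symm⟩

namespace WeightStructure

variable (w : WeightStructure C) {m : ℤ}

lemma hom_eq_zero_of_mem_le_pred {X M : C} (hX : X ∈ w.le (m - 1)) (hM : M ∈ w.ge m)
    (f : X ⟶ M) : f = 0 :=
  w.orth (m - 1) X M hX (by rwa [sub_add_cancel]) f

lemma mem_ge_of_forall_hom_eq_zero {M : C} (h : ∀ X ∈ w.le (m - 1), ∀ f : X ⟶ M, f = 0) :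
    M ∈ w.ge m := by
  obtain ⟨A, B, x, y, δ, hT, hA, hB⟩ := w.decomp M (m - 1)
  have : IsSplitMono y := isSplitMono_mor₂_of_mor₁_eq_zero _ hT (h A hA x)
  rw [sub_add_cancel] at hB
  exact w.ge_retract m M B y (retraction y) (IsSplitMono.id y) hB

end WeightStructure

/-- `Hom(-, M)` is of weight range `≥ m` (vanishes on `C_{w ≤ m-1}`) iff
`M ∈ C_{w ≥ m}`. -/
theorem stmt7 (w : WeightStructure C) (m : ℤ) (M : C) :
    (∀ X ∈ w.le (m - 1), ∀ f : X ⟶ M, f = 0) ↔ M ∈ w.ge m :=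
  ⟨w.mem_ge_of_forall_hom_eq_zero, fun hM X hX f => w.hom_eq_zero_of_mem_le_pred hX hM f⟩
end

section
/- Let C be a triangulated category with a weight structure w. Given objects X, Y, integers m ≤ l, chosen weight decompositions w_{≤m}X → X → w_{≥m+1}X and w_{≤l}Y → Y → w_{≥l+1}Y, and a morphism g : X → Y, there exist morphisms a : w_{≤m}X → w_{≤l}Y and b : w_{≥m+1}X → w_{≥l+1}Y making both squares commute (a morphism of the two distinguished triangles extending g). Moreover, if m < l then a and b are uniquely determined by g and the chosen rows. -/
open CategoryTheory CategoryTheory.Limits CategoryTheory.Pretriangulated Opposite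

universe v u

variable (C : Type u) [Category.{v} C] [Preadditive C] [HasZeroObject C]
  [HasShift C ℤ] [∀ n : ℤ, (shiftFunctor C n).Additive] [Pretriangulated C]

variable {C}

lemma WeightStructure.le_subset (w : WeightStructure C) {m l : ℤ} (h : m ≤ l) :
    w.le m ⊆ w.le l := by
  have key : ∀ n : ℕ, w.le m ⊆ w.le (m + n) := by
    intro n
    induction n with
    | zero => simpa using subset_rfl
    | succ k ih =>
        have h2 : m + (k + 1 : ℕ) = (m + k) + 1 := by push_cast; ring
        rw [h2]
        exact ih.trans (w.le_mono (m + k))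
  have h3 : l = m + ((l - m).toNat : ℤ) := by omega
  rw [h3]
  exact key _

lemma WeightStructure.ge_subset (w : WeightStructure C) {m l : ℤ} (h : m ≤ l) :
    w.ge l ⊆ w.ge m := by
  have key : ∀ n : ℕ, w.ge (m + n) ⊆ w.ge m := by
    intro n
    induction n with
    | zero => simpa using subset_rfl
    | succ k ih =>
        have h2 : m + (k + 1 : ℕ) = (m + k) + 1 := by push_cast; ring
        rw [h2]
        exact (w.ge_anti (m + k)).trans ih
  have h3 : l = m + ((l - m).toNat : ℤ) := by omega
  rw [h3] at *
  exact key _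

/-- Any `g : X ⟶ Y` extends to a morphism between chosen `m`- and `l`-weight
decompositions (`m ≤ l`), uniquely so when `m < l`. -/
theorem stmt8 (w : WeightStructure C) (m l : ℤ) (hml : m ≤ l) {X Y : C}
    (g : X ⟶ Y) (A A' B B' : C) (x : A ⟶ X) (x' : X ⟶ A') (δ : A' ⟶ A⟦(1 : ℤ)⟧)
    (y : B ⟶ Y) (y' : Y ⟶ B') (δ' : B' ⟶ B⟦(1 : ℤ)⟧)
    (hX : Triangle.mk x x' δ ∈ distTriang C) (hA : A ∈ w.le m)
    (hA' : A' ∈ w.ge (m + 1))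
    (hY : Triangle.mk y y' δ' ∈ distTriang C) (hB : B ∈ w.le l)
    (hB' : B' ∈ w.ge (l + 1)) :
    (∃ (a : A ⟶ B) (b : A' ⟶ B'), a ≫ y = x ≫ g ∧ x' ≫ b = g ≫ y' ∧
      δ ≫ a⟦(1 : ℤ)⟧' = b ≫ δ') ∧
    (m < l → ∀ (a₁ a₂ : A ⟶ B) (b₁ b₂ : A' ⟶ B'),
      a₁ ≫ y = x ≫ g → x' ≫ b₁ = g ≫ y' →
      a₂ ≫ y = x ≫ g → x' ≫ b₂ = g ≫ y' → a₁ = a₂ ∧ b₁ = b₂) := by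
  
  constructor
  · -- existence
    have h0 : (x ≫ g) ≫ y' = 0 := by
      rw [Category.assoc]
      exact w.orth l A B' (w.le_subset hml hA) hB' _
    obtain ⟨a, ha⟩ := Triangle.coyoneda_exact₂ _ hY (x ≫ g) h0
    obtain ⟨b, hb₁, hb₂⟩ := complete_distinguished_triangle_morphism (Triangle.mk x x' δ) (Triangle.mk y y' δ') hX hY a g ha
    exact ⟨a, b, ha.symm, hb₁, hb₂⟩
  · -- uniqueness
    intro hml' a₁ a₂ b₁ b₂ ha₁ hb₁ ha₂ hb₂
    constructor
    · have hd : (a₁ - a₂) ≫ y = 0 := by rw [Preadditive.sub_comp, ha₁, ha₂, sub_self]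
      obtain ⟨h, hh⟩ := Triangle.coyoneda_exact₂ _ (inv_rot_of_distTriang _ hY) (a₁ - a₂) hd
      have hB'' : (B'⟦(-1 : ℤ)⟧) ∈ w.ge (m + 1) := by
        have := w.ge_shift (l + 1) (-1) B' hB'
        have h2 : l + 1 + -1 = l := by omega
        rw [h2] at this
        exact w.ge_subset (by omega) this
      have : h = 0 := w.orth m A _ hA hB'' h
      rw [this, zero_comp] at hh
      exact sub_eq_zero.mp hh
    · have he : x' ≫ (b₁ - b₂) = 0 := by rw [Preadditive.comp_sub, hb₁, hb₂, sub_self]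
      obtain ⟨k, hk⟩ := Triangle.yoneda_exact₃ _ hX (b₁ - b₂) he
      have hA1 : (A⟦(1 : ℤ)⟧) ∈ w.le l := w.le_subset (by omega) (w.le_shift m 1 A hA)
      have : k = 0 := w.orth l _ B' hA1 hB' k
      rw [this, comp_zero] at hk
      exact sub_eq_zero.mp hk
end

section
/- Let C be a triangulated category with adjacent weight structure w and t-structure t, and m ≤ n. Then the class of C[m,n]-conull morphisms (morphisms h such that Hom(h, I) = 0 for all I ∈ C[m,n]) coincides with the class of morphisms that kill weights m,...,n. -/
open CategoryTheory CategoryTheory.Limits CategoryTheory.Pretriangulated Opposite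

/-!
Adjacency gives `C_{w ≥ k} = C_{t ≥ k}` for every `k`. If `h` kills weights `m, …, n` and
`f : N ⟶ I` with `I ∈ C[m,n]`, then `f` vanishes on `w_{≤ m-1}N` and so factors through
`w_{≥ m}N`; the resulting map `M ⟶ I` vanishes on `w_{≤ n}M`, hence factors through
`w_{≥ n+1}M ∈ C_{t ≥ n+1}`, which is orthogonal to `I ∈ C_{t ≤ n}`. Conversely, let
`A₀ ⟶ w_{≥ m}N ⟶ I` be the `t`-truncation at `n`; then `I ∈ C[m,n]`, so the composite
`w_{≤ n}M ⟶ w_{≥ m}N` vanishes after `⟶ I`, hence factors through `A₀ ∈ C_{w ≥ n+1}`,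
which is orthogonal to `w_{≤ n}M`.
-/

universe v u

variable (C : Type u) [Category.{v} C] [Preadditive C] [HasZeroObject C]
  [HasShift C ℤ] [∀ n : ℤ, (shiftFunctor C n).Additive] [Pretriangulated C]

variable {C}

/-- A `t`-structure on the triangulated category `C` (cohomological conventions,
with `le n = C_{t ≤ n}` and `ge n = C_{t ≥ n}`). -/
structure TStructure (C : Type u) [Category.{v} C] [Preadditive C] [HasZeroObject C]
    [HasShift C ℤ] [∀ n : ℤ, (shiftFunctor C n).Additive] [Pretriangulated C] where
  le : ℤ → Set C
  ge : ℤ → Set C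
  le_iso_closed : ∀ (n : ℤ) (X Y : C), (X ≅ Y) → X ∈ le n → Y ∈ le n
  ge_iso_closed : ∀ (n : ℤ) (X Y : C), (X ≅ Y) → X ∈ ge n → Y ∈ ge n
  le_shift : ∀ (n k : ℤ) (X : C), X ∈ le n → X⟦k⟧ ∈ le (n + k)
  ge_shift : ∀ (n k : ℤ) (X : C), X ∈ ge n → X⟦k⟧ ∈ ge (n + k)
  le_mono : ∀ n : ℤ, le n ⊆ le (n + 1)
  ge_anti : ∀ n : ℤ, ge (n + 1) ⊆ ge n
  orth : ∀ (n : ℤ) (X Y : C), X ∈ ge (n + 1) → Y ∈ le n → ∀ f : X ⟶ Y, f = 0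
  decomp : ∀ (X : C) (n : ℤ), ∃ (A B : C) (x : A ⟶ X) (y : X ⟶ B) (δ : B ⟶ A⟦(1 : ℤ)⟧),
    (Triangle.mk x y δ ∈ distTriang C) ∧ A ∈ ge (n + 1) ∧ B ∈ le n

lemma mem_iff_shift_mem_zero {D : Type*} [Category D] [HasShift D ℤ] (P : ℤ → Set D)
    (iso_closed : ∀ (n : ℤ) (X Y : D), (X ≅ Y) → X ∈ P n → Y ∈ P n)
    (shift : ∀ (n k : ℤ) (X : D), X ∈ P n → X⟦k⟧ ∈ P (n + k)) (k : ℤ) (X : D) :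
    X ∈ P k ↔ X⟦-k⟧ ∈ P 0 := by
  constructor
  · intro hX
    simpa using shift k (-k) X hX
  · intro hX
    exact iso_closed k _ _ (shiftNegShift X k) (by simpa using shift 0 k _ hX)

lemma WeightStructure.ge_eq_of_ge_zero_eq {w : WeightStructure C} {t : TStructure C}
    (adj : w.ge 0 = t.ge 0) (k : ℤ) : w.ge k = t.ge k := by
  ext X
  rw [mem_iff_shift_mem_zero w.ge w.ge_iso_closed w.ge_shift, adj,
    ← mem_iff_shift_mem_zero t.ge t.ge_iso_closed t.ge_shift]

lemma TStructure.ge_antitone (t : TStructure C) : Antitone t.ge :=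
  antitone_int_of_succ_le t.ge_anti

lemma WeightStructure.eq_zero_of_comp_eq_zero (w : WeightStructure C) {n : ℤ}
    (T : Triangle C) (hT : T ∈ distTriang C) (h₁ : T.obj₁ ∈ w.ge (n + 1))
    {A : C} (hA : A ∈ w.le n) (c : A ⟶ T.obj₂) (hc : c ≫ T.mor₂ = 0) : c = 0 := by
  obtain ⟨d, rfl⟩ := Triangle.coyoneda_exact₂ T hT c hc
  rw [w.orth n A T.obj₁ hA h₁ d, zero_comp]

lemma TStructure.eq_zero_of_comp_eq_zero (t : TStructure C) {n : ℤ}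
    (T : Triangle C) (hT : T ∈ distTriang C) (h₃ : T.obj₃ ∈ t.ge (n + 1))
    {I : C} (hI : I ∈ t.le n) (g : T.obj₂ ⟶ I) (hg : T.mor₁ ≫ g = 0) : g = 0 := by
  obtain ⟨d, rfl⟩ := Triangle.yoneda_exact₂ T hT g hg
  rw [t.orth n T.obj₃ I h₃ hI d, comp_zero]

lemma TStructure.mem_ge_of_forall_eq_zero {w : WeightStructure C} {t : TStructure C}
    (adj : w.ge 0 = t.ge 0) (k : ℤ) (X : C)
    (hX : ∀ Y ∈ t.le (k - 1), ∀ f : X ⟶ Y, f = 0) : X ∈ t.ge k := by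
  obtain ⟨A, B, x, y, δ, hT, hA, hB⟩ := t.decomp X (k - 1)
  obtain ⟨s, hs⟩ := Triangle.coyoneda_exact₂ _ hT (𝟙 X) 
    (by change 𝟙 X ≫ y = 0; rw [hX B hB y, comp_zero])
  rw [sub_add_cancel, ← w.ge_eq_of_ge_zero_eq adj] at hA
  rw [← w.ge_eq_of_ge_zero_eq adj]
  -- `t` has no retract axiom, but `C_{w ≥ k}` does
  exact w.ge_retract k X A s x hs.symm hA

lemma TStructure.obj₃_mem_ge {w : WeightStructure C} {t : TStructure C}
    (adj : w.ge 0 = t.ge 0) {k : ℤ} (T : Triangle C) (hT : T ∈ distTriang C)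
    (h₁ : T.obj₁ ∈ t.ge (k - 1)) (h₂ : T.obj₂ ∈ t.ge k) : T.obj₃ ∈ t.ge k := by
  refine TStructure.mem_ge_of_forall_eq_zero adj k _ fun Y hY f => ?_
  have hvf : T.mor₂ ≫ f = 0 :=
    t.orth (k - 1) _ Y (by rwa [sub_add_cancel]) hY _
  obtain ⟨g, rfl⟩ := Triangle.yoneda_exact₃ T hT f hvf
  have h₁' : T.obj₁⟦(1 : ℤ)⟧ ∈ t.ge (k - 1 + 1) := t.ge_shift (k - 1) 1 _ h₁
  rw [t.orth (k - 1) _ Y h₁' hY g, comp_zero]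

/-- The paper's `C[m,n]`-conull morphisms. -/
def TStructure.Conull (t : TStructure C) (m n : ℤ) {M N : C} (h : M ⟶ N) : Prop :=
  ∀ I : C, I ∈ t.le n ∩ t.ge m → ∀ f : N ⟶ I, h ≫ f = 0

lemma WeightStructure.KillsWeights.conull {w : WeightStructure C} {t : TStructure C}
    (adj : w.ge 0 = t.ge 0) {m n : ℤ} {M N : C} {h : M ⟶ N} (hh : w.KillsWeights m n h) :
    t.Conull m n h := by
  rintro I ⟨hIle, hIge⟩ f
  obtain ⟨A, A', B, B', x, x', y', y, ⟨⟨δ₁, hT₁⟩, -, hA'⟩, ⟨⟨δ₂, hT₂⟩, hB, -⟩, hzero⟩ :=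
    hh
  have hy'f : y' ≫ f = 0 :=
    w.orth (m - 1) B I hB (by rw [sub_add_cancel, w.ge_eq_of_ge_zero_eq adj]; exact hIge) _
  obtain ⟨fb : B' ⟶ I, rfl⟩ := Triangle.yoneda_exact₂ _ hT₂ f hy'f
  rw [w.ge_eq_of_ge_zero_eq adj] at hA'
  exact t.eq_zero_of_comp_eq_zero _ hT₁ hA' hIle (h ≫ y ≫ fb)
    (by change x ≫ h ≫ y ≫ fb = 0; simpa using hzero =≫ fb)

lemma TStructure.Conull.killsWeights {w : WeightStructure C} {t : TStructure C}
    (adj : w.ge 0 = t.ge 0) {m n : ℤ} (hmn : m ≤ n) {M N : C} {h : M ⟶ N}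
    (hh : t.Conull m n h) : w.KillsWeights m n h := by
  obtain ⟨A, A', x, x', δ₁, hT₁, hA, hA'⟩ := w.decomp M n
  obtain ⟨B, B', y', y, δ₂, hT₂, hB, hB'⟩ := w.decomp N (m - 1)
  obtain ⟨A₀, I, u, v, δ₃, hT₃, hA₀, hI⟩ := t.decomp B' n
  rw [sub_add_cancel, w.ge_eq_of_ge_zero_eq adj] at hB'
  have hIge : I ∈ t.ge m :=
    TStructure.obj₃_mem_ge adj _ hT₃ (t.ge_antitone (by omega) hA₀) hB'
  have hv : (x ≫ h ≫ y) ≫ v = 0 := by simp [hh I ⟨hI, hIge⟩ (y ≫ v)]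
  rw [← w.ge_eq_of_ge_zero_eq adj] at hA₀
  exact ⟨A, A', B, B', x, x', y', y, ⟨⟨δ₁, hT₁⟩, hA, hA'⟩,
    ⟨⟨δ₂, hT₂⟩, hB, by rwa [sub_add_cancel, w.ge_eq_of_ge_zero_eq adj]⟩,
    w.eq_zero_of_comp_eq_zero _ hT₃ hA₀ hA _ hv⟩

/-- If `t` is adjacent to `w`, the `C[m,n]`-conull morphisms are exactly the
morphisms killing weights `m, …, n`. -/
theorem stmt12 (w : WeightStructure C) (t : TStructure C)
    (adj : w.ge 0 = t.ge 0) (m n : ℤ) (hmn : m ≤ n) {M N : C} (h : M ⟶ N) :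
    (∀ I : C, I ∈ t.le n ∩ t.ge m → ∀ f : N ⟶ I, h ≫ f = 0) ↔
      w.KillsWeights m n h :=
  ⟨TStructure.Conull.killsWeights adj hmn, WeightStructure.KillsWeights.conull adj⟩
end

section
/- Let (L, R) be a torsion theory on a triangulated category C. Then (L, J) is a projective class, where J is the class of L-null morphisms (morphisms h with Hom(P, h) = 0 for all P ∈ L). Moreover, J coincides with the class of morphisms that factor through an object of R. -/
open CategoryTheory CategoryTheory.Limits CategoryTheory.Pretriangulated Opposite

universe v u

variable (C : Type u) [Category.{v} C] [Preadditive C] [HasZeroObject C]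
  [HasShift C ℤ] [∀ n : ℤ, (shiftFunctor C n).Additive] [Pretriangulated C]

variable {C}

/-- The class of objects right-orthogonal to `S`. -/
def rightOrth (S : Set C) : Set C := {Y : C | ∀ X ∈ S, ∀ f : X ⟶ Y, f = 0}

/-- The class of objects left-orthogonal to `S`. -/
def leftOrth (S : Set C) : Set C := {X : C | ∀ Y ∈ S, ∀ f : X ⟶ Y, f = 0}

/-- A torsion theory on `C`. -/
structure TorsionTheory (C : Type u) [Category.{v} C] [Preadditive C]
    [HasZeroObject C] [HasShift C ℤ] [∀ n : ℤ, (shiftFunctor C n).Additive]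
    [Pretriangulated C] where
  L : Set C
  R : Set C
  right_orth : rightOrth L = R
  left_orth : leftOrth R = L
  decomp : ∀ M : C, ∃ (LM RM : C) (a : LM ⟶ M) (b : M ⟶ RM)
    (δ : RM ⟶ LM⟦(1 : ℤ)⟧),
    (Triangle.mk a b δ ∈ distTriang C) ∧ LM ∈ L ∧ RM ∈ R

/-- `(P, J)` is a projective class. -/
def IsProjectiveClass (P : Set C) (J : MorphismProperty C) : Prop :=
  (∀ ⦃X Y : C⦄ (h : X ⟶ Y), J h ↔ ∀ M ∈ P, ∀ f : M ⟶ X, f ≫ h = 0) ∧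
  (∀ M : C, M ∈ P ↔ ∀ ⦃X Y : C⦄ (h : X ⟶ Y), J h → ∀ f : M ⟶ X, f ≫ h = 0) ∧
  (∀ M : C, ∃ (PM IM : C) (i : PM ⟶ M) (j : M ⟶ IM) (δ : IM ⟶ PM⟦(1 : ℤ)⟧),
    (Triangle.mk i j δ ∈ distTriang C) ∧ PM ∈ P ∧ J j)


/-- For a torsion theory `(L, R)`, the pair `(L, {L-null morphisms})` is a
projective class, and the `L`-null morphisms are those factoring through `R`. -/
theorem stmt13 (s : TorsionTheory C) :
    IsProjectiveClass s.L
      (fun X _ h => ∀ M ∈ s.L, ∀ f : M ⟶ X, f ≫ h = 0) ∧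
    ∀ (X Y : C) (h : X ⟶ Y),
      (∀ M ∈ s.L, ∀ f : M ⟶ X, f ≫ h = 0) ↔
        ∃ (Z : C) (a : X ⟶ Z) (b : Z ⟶ Y), Z ∈ s.R ∧ a ≫ b = h := by
  have hR : ∀ {P Z : C}, P ∈ s.L → Z ∈ s.R → ∀ f : P ⟶ Z, f = 0 := by
    intro P Z hP hZ f
    rw [← s.right_orth] at hZ
    exact hZ P hP f
  constructor
  · refine ⟨fun X Y h => Iff.rfl, fun M => ⟨fun hM X Y h hJ f => hJ M hM f, fun H => ?_⟩, ?_⟩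
    · rw [← s.left_orth]
      intro Z hZ f
      have := H (𝟙 Z) (fun P hP g => by simpa using hR hP hZ g) f
      simpa using this
    · intro M
      obtain ⟨LM, RM, a, b, δ, hT, hL, hRm⟩ := s.decomp M
      exact ⟨LM, RM, a, b, δ, hT, hL, fun P hP f => hR hP hRm (f ≫ b)⟩
  · intro X Y h
    constructor
    · intro hJ
      obtain ⟨LX, RX, a, b, δ, hT, hL, hRx⟩ := s.decomp X
      obtain ⟨c, hc⟩ := Triangle.yoneda_exact₂ _ hT h (hJ LX hL a)
      exact ⟨RX, b, c, hRx, hc.symm⟩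
    · rintro ⟨Z, a, b, hZ, rfl⟩ P hP f
      rw [← Category.assoc, show f ≫ a = 0 from hR hP hZ _, zero_comp]
end

section
/- Let C be a triangulated category with a weight structure w and an adjacent t-structure t (C_{w≥0} = C_{t≥0}). Then C_{w∉[m,n]} ⊥ C[m,n]: for any L without weights m,...,n and any R ∈ C_{t≤n} ∩ C_{t≥m}, Hom(L, R) = 0. -/
open CategoryTheory CategoryTheory.Limits CategoryTheory.Pretriangulated Opposite

universe v u

variable (C : Type u) [Category.{v} C] [Preadditive C] [HasZeroObject C]
  [HasShift C ℤ] [∀ n : ℤ, (shiftFunctor C n).Additive] [Pretriangulated C]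

variable {C}

/- Adjacency means `C_{w ≥ k} = C_{t ≥ k}` for all `k`. If `x : w_{≤ n} L → L` and
`y : L → w_{≥ m} L` witness that `L` has no weights `m, …, n`, then `x` factors through
`w_{≤ m - 1} L ∈ C_{w ≤ m - 1}`, which is orthogonal to `R ∈ C_{w ≥ m}`; so `x ≫ f = 0` and `f`
factors through `w_{≥ n + 1} L ∈ C_{t ≥ n + 1}`, which is orthogonal to `R ∈ C_{t ≤ n}`. -/

lemma mem_iff_shift_neg_mem_zero {D : Type*} [Category D] [HasShift D ℤ] {P : ℤ → Set D}
    (iso_closed : ∀ (n : ℤ) (X Y : D), (X ≅ Y) → X ∈ P n → Y ∈ P n)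
    (shift : ∀ (n k : ℤ) (X : D), X ∈ P n → X⟦k⟧ ∈ P (n + k)) (k : ℤ) (X : D) :
    X ∈ P k ↔ X⟦-k⟧ ∈ P 0 := by
  constructor
  · intro hX
    simpa using shift k (-k) X hX
  · intro hX
    have hX' : X⟦-k⟧⟦k⟧ ∈ P k := by simpa using shift 0 k _ hX
    exact iso_closed k _ _ ((shiftFunctorCompIsoId D (-k) k (neg_add_cancel k)).app X) hX'

lemma WeightStructure.ge_eq_of_adjacent (w : WeightStructure C) (t : TStructure C)
    (adj : w.ge 0 = t.ge 0) (k : ℤ) : w.ge k = t.ge k := by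
  ext X
  rw [mem_iff_shift_neg_mem_zero w.ge_iso_closed w.ge_shift,
    mem_iff_shift_neg_mem_zero t.ge_iso_closed t.ge_shift, adj]

lemma WeightStructure.hom_eq_zero_of_mem_without (w : WeightStructure C) {m n : ℤ} {L R : C}
    (hL : L ∈ w.without m n) (hle : ∀ B ∈ w.le (m - 1), ∀ g : B ⟶ R, g = 0)
    (hge : ∀ A ∈ w.ge (n + 1), ∀ g : A ⟶ R, g = 0) (f : L ⟶ R) : f = 0 := by
  obtain ⟨A, A', B, B', x, x', y', y, ⟨⟨δ₁, hT₁⟩, -, hA'⟩, ⟨⟨δ₂, hT₂⟩, hB, -⟩, hxy⟩ := hL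
  rw [Category.id_comp] at hxy
  obtain ⟨b, hb⟩ : ∃ b : A ⟶ B, x = b ≫ y' := Triangle.coyoneda_exact₂ _ hT₂ x hxy
  have hxf : x ≫ f = 0 := by
    rw [hb, Category.assoc, hle B hB (y' ≫ f), comp_zero]
  obtain ⟨g, hg⟩ : ∃ g : A' ⟶ R, f = x' ≫ g := Triangle.yoneda_exact₂ _ hT₁ f hxf
  rw [hg, hge A' hA' g, comp_zero]

theorem stmt19_general (w : WeightStructure C) (t : TStructure C)
    (adj : w.ge 0 = t.ge 0) (m n : ℤ) (L R : C)
    (hL : L ∈ w.without m n) (hR : R ∈ t.le n ∩ t.ge m) (f : L ⟶ R) :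
    f = 0 := by
  obtain ⟨hRle, hRge⟩ := hR
  refine w.hom_eq_zero_of_mem_without hL (fun B hB g => ?_) (fun A hA g => ?_) f
  · have hRw : R ∈ w.ge (m - 1 + 1) := by
      rwa [sub_add_cancel, w.ge_eq_of_adjacent t adj]
    exact w.orth (m - 1) B R hB hRw g
  · rw [w.ge_eq_of_adjacent t adj] at hA
    exact t.orth n A R hA hRle g

/-- For adjacent `w` and `t`, objects without weights `m, …, n` are
left-orthogonal to `C[m, n]`. -/
theorem stmt19 (w : WeightStructure C) (t : TStructure C)
    (adj : w.ge 0 = t.ge 0) (m n : ℤ) (hmn : m ≤ n) (L R : C)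
    (hL : L ∈ w.without m n) (hR : R ∈ t.le n ∩ t.ge m) (f : L ⟶ R) :
    f = 0 :=
  stmt19_general w t adj m n L R hL hR f
end
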